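/- arXiv:2108.05623 — 5 statements merged into one kernel-verified Lean document; each statement's English description precedes it below -/
import Mathlib

section
/- Let S, N be positive integers and S_N ∈ ℝ^{N×SN} the sampling matrix with (S_N)_{i,j} = 1 if j = S·i and 0 otherwise. Then for any x ∈ ℝ^{SN}, S_N C(x) S_Nᵀ = C(S_N x), i.e. sampling a circulant matrix on both sides yields the circulant matrix of the sampled vector. -/
open Matrix BigOperators

/-- Spectral norm (largest singular value) of a real matrix,
as the operator norm of the induced map between Euclidean spaces. -/
noncomputable def spec {m n : Type*} [Fintype m] [Fintype n] [DecidableEq n]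
    (A : Matrix m n ℝ) : ℝ :=
  ‖(Matrix.toEuclideanLin A).toContinuousLinearMap‖

/-- Squared Frobenius norm of a matrix. -/
def frob2 {m n : Type*} [Fintype m] [Fintype n] (A : Matrix m n ℝ) : ℝ :=
  ∑ i, ∑ j, (A i j) ^ 2

/-- The stride-`S` sampling matrix `S_N ∈ ℝ^{N×SN}`, `(S_N)_{i,j} = 1` iff `j = S·i`. -/
def samp (S N : ℕ) : Matrix (Fin N) (Fin (S * N)) ℝ :=
  Matrix.of fun i j => if (j : ℕ) = S * (i : ℕ) then 1 else 0

open Fin.IntCast in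
/-- Circular embedding `P_n : ℝ^k → ℝ^n` (`k = 2r+1`): places `h j` at position `(r - j) mod n`,
i.e. `[P_n(h)]_i = h_{r-i}` for `i ∈ [-r,r] mod n`, and `0` otherwise. -/
noncomputable def Pemb (r n : ℕ) [NeZero n] (h : Fin (2*r+1) → ℝ) : Fin n → ℝ :=
  fun i => ∑ j : Fin (2*r+1), if i = (((r : ℤ) - (j : ℤ) : ℤ) : Fin n) then h j else 0

/-- Layer transform matrix `𝒦 ∈ ℝ^{MN×CSN}` of a 1D circular strided convolutional layer
with kernel tensor `K ∈ ℝ^{M×C×k}`: block `(i,j)` is `S_N · C(P_{SN}(K_{i,j}))`. -/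
noncomputable def layerMat (M C r S N : ℕ) [NeZero (S*N)]
    (K : Fin M → Fin C → Fin (2*r+1) → ℝ) :
    Matrix (Fin M × Fin N) (Fin C × Fin (S*N)) ℝ :=
  Matrix.of fun p q =>
    (samp S N * Matrix.circulant (Pemb r (S*N) (K p.1 q.1))) p.2 q.2

/-- `conv(h,g, padding zero = P, stride = S) ∈ ℝ^{2P/S+1}` with `P = ⌊(k-1)/S⌋·S`, `k = 2r+1`:
the strided zero-padded cross-correlation of `h` and `g`. -/
noncomputable def convPS (r S : ℕ) (h g : Fin (2*r+1) → ℝ) :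
    Fin (2*((2*r)/S)+1) → ℝ :=
  fun i => ∑ i' : Fin (2*r+1),
    h i' *
      (if hd : ((2*r)/S)*S ≤ S * (i : ℕ) + (i' : ℕ) ∧
               S * (i : ℕ) + (i' : ℕ) ≤ ((2*r)/S)*S + 2*r
       then g ⟨S * (i : ℕ) + (i' : ℕ) - ((2*r)/S)*S, by omega⟩ else 0)

open Fin.IntCast in
/-- Circular embedding `Q_{S,N} : ℝ^{2q+1} → ℝ^N` (`q = P/S`): places `x j` at position
`(j - q) mod N`, so the central coordinate `x_q` sits at index `0`. -/
noncomputable def Qemb (q N : ℕ) [NeZero N] (x : Fin (2*q+1) → ℝ) : Fin N → ℝ :=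
  fun i => ∑ j : Fin (2*q+1), if i = (((j : ℤ) - (q : ℤ) : ℤ) : Fin N) then x j else 0

/-- `L_orth` raw sum: `‖CONV(K,K,padding = P, stride = S) − I_{r0}‖_F²`. -/
noncomputable def Lraw (M C r S : ℕ) (K : Fin M → Fin C → Fin (2*r+1) → ℝ) : ℝ :=
  ∑ m : Fin M, ∑ l : Fin M, ∑ t : Fin (2*((2*r)/S)+1),
    ((∑ c : Fin C, convPS r S (K m c) (K l c) t) -
      (if m = l ∧ (t : ℕ) = (2*r)/S then 1 else 0)) ^ 2

/-- `'valid'` boundary single-channel transform matrix `A_N(h) ∈ ℝ^{(N−k+1)×N}`. -/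
def validMat (r N : ℕ) (h : Fin (2*r+1) → ℝ) :
    Matrix (Fin (N - (2*r+1) + 1)) (Fin N) ℝ :=
  Matrix.of fun i j =>
    if hd : (i : ℕ) ≤ (j : ℕ) ∧ (j : ℕ) - (i : ℕ) ≤ 2*r
    then h ⟨(j : ℕ) - (i : ℕ), by omega⟩ else 0

/-- Zero-padding `'same'` single-channel transform matrix `A_N(h) ∈ ℝ^{N×N}`:
`A_N(h)_{i,j} = h_{j−i+r}` when `|j−i| ≤ r`, and `0` otherwise. -/
def sameMat (r N : ℕ) (h : Fin (2*r+1) → ℝ) : Matrix (Fin N) (Fin N) ℝ :=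
  Matrix.of fun i j =>
    if hd : (i : ℕ) ≤ (j : ℕ) + r ∧ (j : ℕ) ≤ (i : ℕ) + r
    then h ⟨(j : ℕ) + r - (i : ℕ), by omega⟩ else 0

/-- `S_N C(x) S_Nᵀ = C(S_N x)` for `x ∈ ℝ^{SN}`. -/
theorem stmt3 (S N : ℕ) (hS : 0 < S) (hN : 0 < N) (x : Fin (S*N) → ℝ) :
    samp S N * Matrix.circulant x * (samp S N)ᵀ =
      Matrix.circulant ((samp S N).mulVec x) := by
  have he : ∀ i : Fin N, S * (i : ℕ) < S * N :=
    fun i => (Nat.mul_lt_mul_left hS).mpr i.isLt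
  have hsum : ∀ (f : Fin (S*N) → ℝ) (i : Fin N),
      (∑ k : Fin (S*N), (if (k : ℕ) = S * (i : ℕ) then (1:ℝ) else 0) * f k)
        = f ⟨S * (i : ℕ), he i⟩ := by
    intro f i
    rw [Finset.sum_eq_single (⟨S * (i : ℕ), he i⟩ : Fin (S*N))]
    · simp
    · intro b _ hb
      rw [if_neg (fun h => hb (Fin.ext h)), zero_mul]
    · simp
  have hsum' : ∀ (f : Fin (S*N) → ℝ) (i : Fin N),
      (∑ k : Fin (S*N), f k * (if (k : ℕ) = S * (i : ℕ) then (1:ℝ) else 0))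
        = f ⟨S * (i : ℕ), he i⟩ := by
    intro f i
    simp only [mul_comm (f _)]
    exact hsum f i
  ext i j
  simp only [Matrix.mul_apply, Matrix.transpose_apply, Matrix.circulant_apply,
    Matrix.mulVec, dotProduct, samp, Matrix.of_apply]
  rw [hsum' (fun l => ∑ k : Fin (S*N),
      (if (k : ℕ) = S * (i : ℕ) then (1:ℝ) else 0) * x (k - l)) j,
    hsum (fun k => x (k - ⟨S * (j : ℕ), he j⟩)) i, hsum x (i - j)]
  congr 1
  apply Fin.ext
  simp only [Fin.sub_def]
  have h1 : S * N - S * (j : ℕ) = S * (N - (j : ℕ)) := by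
    rw [Nat.mul_sub]
  rw [h1, ← Nat.mul_add, Nat.mul_mod_mul_left]
end

section
/- Let k = 2r+1, k_S = min(k,S), and let N satisfy SN ≥ k. For j, l ∈ {0,…,k_S−1}, let e_j denote the j-th canonical basis vector of ℝ^k. Then S_N C(P_{SN}(e_j)) C(P_{SN}(e_l))ᵀ S_Nᵀ = δ_{j=l} · I_N. -/
open Matrix BigOperators

open Fin.CommRing

lemma pemb_single' (r n : ℕ) [NeZero n] (e : Fin (2*r+1)) (x : Fin n) :
    Pemb r n (Pi.single e 1) x = if x = (r : Fin n) - ((e : ℕ) : Fin n) then 1 else 0 := by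
  unfold Pemb
  rw [Finset.sum_eq_single e]
  · rw [Pi.single_eq_same]
    congr 2
    push_cast
    rfl
  · intro b _ hb
    rw [Pi.single_eq_of_ne hb]
    simp
  · simp

lemma samp_mul' (S N : ℕ) (hS : 0 < S) [NeZero (S*N)] {α : Type*} [Fintype α]
    (A : Matrix (Fin (S*N)) α ℝ) (i : Fin N) (b : α) :
    (samp S N * A) i b = A ((S * (i:ℕ) : ℕ) : Fin (S*N)) b := by
  have hlt : S * (i:ℕ) < S * N := (Nat.mul_lt_mul_left hS).mpr i.isLt
  have hc : (((S * (i:ℕ) : ℕ) : Fin (S*N)) : ℕ) = S * (i:ℕ) := by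
    rw [Fin.val_natCast]; exact Nat.mod_eq_of_lt hlt
  rw [Matrix.mul_apply, Finset.sum_eq_single ((S * (i:ℕ) : ℕ) : Fin (S*N))]
  · rw [samp, Matrix.of_apply, if_pos hc, one_mul]
  · intro a _ ha
    have : (a:ℕ) ≠ S*(i:ℕ) := fun h => ha (Fin.ext (by rw [h, hc]))
    rw [samp, Matrix.of_apply, if_neg this, zero_mul]
  · intro h; exact absurd (Finset.mem_univ _) h

lemma mul_sampT' (S N : ℕ) (hS : 0 < S) [NeZero (S*N)] {α : Type*} [Fintype α]
    (A : Matrix α (Fin (S*N)) ℝ) (i : Fin N) (b : α) :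
    (A * (samp S N)ᵀ) b i = A b ((S * (i:ℕ) : ℕ) : Fin (S*N)) := by
  have hlt : S * (i:ℕ) < S * N := (Nat.mul_lt_mul_left hS).mpr i.isLt
  have hc : (((S * (i:ℕ) : ℕ) : Fin (S*N)) : ℕ) = S * (i:ℕ) := by
    rw [Fin.val_natCast]; exact Nat.mod_eq_of_lt hlt
  rw [Matrix.mul_apply, Finset.sum_eq_single ((S * (i:ℕ) : ℕ) : Fin (S*N))]
  · rw [Matrix.transpose_apply, samp, Matrix.of_apply, if_pos hc, mul_one]
  · intro a _ ha
    have : (a:ℕ) ≠ S*(i:ℕ) := fun h => ha (Fin.ext (by rw [h, hc]))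
    rw [Matrix.transpose_apply, samp, Matrix.of_apply, if_neg this, mul_zero]
  · intro h; exact absurd (Finset.mem_univ _) h

lemma circ_mul' (n : ℕ) [NeZero n] (d1 d2 : Fin n) (a a' : Fin n) :
    (Matrix.circulant (fun x => if x = d1 then (1:ℝ) else 0) *
     (Matrix.circulant (fun x => if x = d2 then (1:ℝ) else 0))ᵀ) a a'
    = if a' + d1 = a + d2 then 1 else 0 := by
  rw [Matrix.mul_apply, Finset.sum_eq_single (a - d1)]
  · rw [Matrix.circulant_apply, Matrix.transpose_apply, Matrix.circulant_apply,
        sub_sub_cancel, if_pos rfl, one_mul]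
    congr 1
    apply propext
    constructor <;> intro h <;> linear_combination h
  · intro b _ hb
    rw [Matrix.circulant_apply]
    have : a - b ≠ d1 := fun h => hb (by linear_combination -h)
    rw [if_neg this, zero_mul]
  · intro h; exact absurd (Finset.mem_univ _) h

/-- for `j, l ∈ {0,…,k_S−1}`, `k_S = min(k,S)`, `SN ≥ k`,
`S_N C(P_{SN}(e_j)) C(P_{SN}(e_l))ᵀ S_Nᵀ = δ_{j=l} I_N`. -/
theorem stmt5 (r S N : ℕ) [NeZero (S*N)] (hk : 2*r+1 ≤ S*N)
    (j l : Fin (min (2*r+1) S)) :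
    samp S N *
      Matrix.circulant (Pemb r (S*N) (Pi.single (Fin.castLE (min_le_left _ _) j) 1)) *
      (Matrix.circulant (Pemb r (S*N) (Pi.single (Fin.castLE (min_le_left _ _) l) 1)))ᵀ *
      (samp S N)ᵀ
    = if j = l then (1 : Matrix (Fin N) (Fin N) ℝ) else 0 := by
  have hS : 0 < S := by
    rcases Nat.eq_zero_or_pos S with h | h
    · exfalso; have := j.isLt; simp [h] at this
    · exact h
  have hjS : (j:ℕ) < S := lt_of_lt_of_le j.isLt (min_le_right _ _)
  have hlS : (l:ℕ) < S := lt_of_lt_of_le l.isLt (min_le_right _ _)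
  have hv1 : Pemb r (S*N) (Pi.single (Fin.castLE (min_le_left (2*r+1) S) j) 1)
      = fun x => if x = (r : Fin (S*N)) - (((j:ℕ) : ℕ) : Fin (S*N)) then (1:ℝ) else 0 := by
    funext x; rw [pemb_single']; rfl
  have hv2 : Pemb r (S*N) (Pi.single (Fin.castLE (min_le_left (2*r+1) S) l) 1)
      = fun x => if x = (r : Fin (S*N)) - (((l:ℕ) : ℕ) : Fin (S*N)) then (1:ℝ) else 0 := by
    funext x; rw [pemb_single']; rfl
  ext i i'
  rw [hv1, hv2, mul_sampT' S N hS, Matrix.mul_assoc, samp_mul' S N hS, circ_mul']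
  have hb : ∀ (m : Fin N) (s : ℕ), s < S → S * (m:ℕ) + s < S * N := by
    intro m s hs
    have h2 : S * ((m:ℕ)+1) ≤ S * N := Nat.mul_le_mul_left S m.isLt
    calc S * (m:ℕ) + s < S * ((m:ℕ)+1) := by rw [Nat.mul_succ]; exact Nat.add_lt_add_left hs _
    _ ≤ S * N := h2
  have hcond : (((S * (i':ℕ) : ℕ) : Fin (S*N)) + ((r : Fin (S*N)) - (((j:ℕ) : ℕ) : Fin (S*N)))
      = ((S * (i:ℕ) : ℕ) : Fin (S*N)) + ((r : Fin (S*N)) - (((l:ℕ) : ℕ) : Fin (S*N))))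
      ↔ (i = i' ∧ j = l) := by
    have step1 : (((S * (i':ℕ) : ℕ) : Fin (S*N)) + ((r : Fin (S*N)) - (((j:ℕ) : ℕ) : Fin (S*N)))
        = ((S * (i:ℕ) : ℕ) : Fin (S*N)) + ((r : Fin (S*N)) - (((l:ℕ) : ℕ) : Fin (S*N))))
        ↔ (((S * (i':ℕ) + (l:ℕ) : ℕ) : Fin (S*N)) = ((S * (i:ℕ) + (j:ℕ) : ℕ) : Fin (S*N))) := by
      push_cast
      constructor <;> intro h <;> linear_combination h
    rw [step1, Fin.ext_iff, Fin.val_natCast, Fin.val_natCast,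
        Nat.mod_eq_of_lt (hb i' _ hlS), Nat.mod_eq_of_lt (hb i _ hjS)]
    constructor
    · intro h
      have hmod := congrArg (· % S) h
      simp only [Nat.mul_add_mod] at hmod
      have hjl : (l:ℕ) = (j:ℕ) := by
        rwa [Nat.mod_eq_of_lt hlS, Nat.mod_eq_of_lt hjS] at hmod
      have hii : (i:ℕ) = (i':ℕ) := by
        have : S * (i':ℕ) = S * (i:ℕ) := by omega
        exact (Nat.eq_of_mul_eq_mul_left hS this).symm
      exact ⟨Fin.ext hii, (Fin.ext hjl).symm⟩
    · rintro ⟨h1, h2⟩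
      rw [h1, h2]
  rw [if_congr hcond rfl rfl]
  by_cases hjl : j = l
  · simp [hjl, Matrix.one_apply]
  · simp [hjl]
end

section
/- Consider a 1D convolutional layer with circular boundary conditions, architecture (M, C, k, S) with k odd, and input channels of size SN with SN ≥ k. In the row-orthogonality case M ≤ CS, there exists a kernel tensor K ∈ ℝ^{M×C×k} such that the layer transform matrix 𝒦 ∈ ℝ^{MN×CSN} satisfies 𝒦𝒦ᵀ = I_{MN} if and only if M ≤ Ck. -/
open Matrix BigOperators

open Fin.IntCast in
lemma finCast_eq_iff {n : ℕ} [NeZero n] (a b : ℤ) :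
    ((a : Fin n) = (b : Fin n)) ↔ (n : ℤ) ∣ (b - a) := by
  obtain ⟨m, rfl⟩ := Nat.exists_eq_succ_of_ne_zero (NeZero.ne n)
  exact (ZMod.intCast_eq_intCast_iff a b (m+1)).trans Int.modEq_iff_dvd

open Fin.IntCast in
lemma fin_eq_intCast_iff {n : ℕ} [NeZero n] (j : Fin n) (x : ℤ) :
    j = ((x : ℤ) : Fin n) ↔ (n : ℤ) ∣ (x - (j : ℕ)) := by
  have h : (( ((j : ℕ) : ℤ) : Fin n)) = j := by
    ext; have := j.isLt; rw [Fin.val_intCast, Int.emod_eq_of_lt (by omega) (by omega)]; simp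
  conv_lhs => rw [← h]
  exact finCast_eq_iff _ _

open Fin.IntCast in
lemma layerMat_apply (M C r S N : ℕ) [NeZero (S*N)]
    (K : Fin M → Fin C → Fin (2*r+1) → ℝ) (m : Fin M) (n : Fin N) (c : Fin C) (j : Fin (S*N)) :
    layerMat M C r S N K (m, n) (c, j) =
      ∑ j' : Fin (2*r+1),
        if ((S*N : ℕ) : ℤ) ∣ ((S : ℤ) * ((n : ℕ) : ℤ) + ((j' : ℕ) : ℤ) - (r : ℕ) - ((j : ℕ) : ℤ))
        then K m c j' else 0 := by
  have hS : 0 < S := Nat.pos_of_ne_zero (by rintro rfl; exact (NeZero.ne (0*N)) (by simp))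
  have hSn : S * (n : ℕ) < S * N := (mul_lt_mul_iff_right₀ hS).mpr n.isLt
  have key : ∀ x : Fin (S*N), ((x : ℕ) = S * (n : ℕ)) = (x = ⟨S * (n : ℕ), hSn⟩) := fun x => by
    simp [Fin.ext_iff]
  simp only [layerMat, Matrix.of_apply, Matrix.mul_apply, samp, key, ite_mul, one_mul, zero_mul,
    Finset.sum_ite_eq', Finset.mem_univ, if_true, Matrix.circulant_apply, Pemb]
  refine Finset.sum_congr rfl fun j' _ => ?_
  have hmk : (⟨S * (n : ℕ), hSn⟩ : Fin (S*N)) = (((S * (n : ℕ) : ℕ) : ℤ) : Fin (S*N)) := by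
    ext
    rw [Fin.val_intCast, ← Int.natCast_mod, Int.toNat_natCast, Nat.mod_eq_of_lt hSn]
  have hj : j = (((j : ℕ) : ℤ) : Fin (S*N)) := by
    ext; have := j.isLt; rw [Fin.val_intCast, Int.emod_eq_of_lt (by omega) (by omega)]; simp
  have hcond : ((⟨S * (n : ℕ), hSn⟩ : Fin (S*N)) - j = (((r : ℤ) - (j' : ℤ) : ℤ) : Fin (S*N))) ↔
      ((S*N : ℕ) : ℤ) ∣ ((S : ℤ) * ((n : ℕ) : ℤ) + ((j' : ℕ) : ℤ) - (r : ℕ) - ((j : ℕ) : ℤ)) := by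
    rw [hmk]
    conv_lhs => rw [hj]
    rw [← @Int.cast_sub (Fin (S*N)) (Fin.instCommRing (S*N)).toAddGroupWithOne, finCast_eq_iff]
    constructor <;> intro hd
    · have := dvd_neg.mpr hd
      obtain ⟨k, hk⟩ := this; exact ⟨k, by push_cast [Nat.cast_mul] at hk ⊢; linarith⟩
    · have := dvd_neg.mpr hd
      obtain ⟨k, hk⟩ := this; exact ⟨k, by push_cast [Nat.cast_mul] at hk ⊢; linarith⟩
  rw [if_congr hcond rfl rfl]

open Fin.IntCast in
lemma stmt7_forward (M C r S N : ℕ) [NeZero (S*N)] (hk : 2*r+1 ≤ S*N)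
    (K : Fin M → Fin C → Fin (2*r+1) → ℝ)
    (hK : layerMat M C r S N K * (layerMat M C r S N K)ᵀ = 1) : M ≤ C*(2*r+1) := by
  have hN : 0 < N := Nat.pos_of_ne_zero (by rintro rfl; exact (NeZero.ne (S*0)) (by simp))
  set n0 : Fin N := ⟨0, hN⟩ with hn0
  set φ : Fin (2*r+1) → Fin (S*N) :=
    fun j' => (((((j' : ℕ) : ℤ) - ((r : ℕ) : ℤ)) : ℤ) : Fin (S*N)) with hφdef
  have hφ : Function.Injective φ := by
    intro a b hab
    rw [hφdef] at hab
    simp only at hab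
    rw [finCast_eq_iff] at hab
    have ha := a.isLt; have hb := b.isLt
    have h0 := Int.eq_zero_of_dvd_of_natAbs_lt_natAbs hab (by omega)
    exact Fin.ext (by omega)
  set 𝒦 := layerMat M C r S N K with h𝒦
  have hE : ∀ (m : Fin M) (c : Fin C) (j : Fin (S*N)),
      𝒦 (m, n0) (c, j) = ∑ j' : Fin (2*r+1), if j = φ j' then K m c j' else 0 := by
    intro m c j
    rw [h𝒦, layerMat_apply]
    refine Finset.sum_congr rfl fun j' _ => ?_
    refine if_congr ?_ rfl rfl
    rw [fin_eq_intCast_iff j (((j' : ℕ) : ℤ) - ((r : ℕ) : ℤ))]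
    have : (S : ℤ) * ((n0 : ℕ) : ℤ) + ((j' : ℕ) : ℤ) - ((r : ℕ) : ℤ) - ((j : ℕ) : ℤ)
        = (((j' : ℕ) : ℤ) - ((r : ℕ) : ℤ)) - ((j : ℕ) : ℤ) := by
      simp [hn0]
    rw [this]
  have heval : ∀ (m : Fin M) (c : Fin C) (j' : Fin (2*r+1)),
      𝒦 (m, n0) (c, φ j') = K m c j' := by
    intro m c j'
    rw [hE]
    have : ∀ j1 : Fin (2*r+1), (if φ j' = φ j1 then K m c j1 else 0)
        = (if j1 = j' then K m c j1 else 0) := fun j1 =>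
      if_congr ⟨fun h => (hφ h).symm, fun h => by rw [h]⟩ rfl rfl
    simp only [this, Finset.sum_ite_eq', Finset.mem_univ, if_true]
  have hzero : ∀ (m : Fin M) (c : Fin C) (j : Fin (S*N)), (∀ j', j ≠ φ j') →
      𝒦 (m, n0) (c, j) = 0 := by
    intro m c j hj
    rw [hE]
    exact Finset.sum_eq_zero fun j' _ => if_neg (hj j')
  set A : Matrix (Fin M) (Fin C × Fin (2*r+1)) ℝ :=
    Matrix.of fun m p => K m p.1 p.2 with hAdef
  have hA : A * Aᵀ = 1 := by
    ext m l
    have h1 := congrFun (congrFun hK (m, n0)) (l, n0)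
    rw [Matrix.mul_apply] at h1
    simp only [Matrix.transpose_apply] at h1
    rw [Matrix.mul_apply]
    simp only [Matrix.transpose_apply, hAdef, Matrix.of_apply]
    have hsum : ∀ c : Fin C, ∑ j : Fin (S*N), 𝒦 (m, n0) (c, j) * 𝒦 (l, n0) (c, j)
        = ∑ j' : Fin (2*r+1), K m c j' * K l c j' := by
      intro c
      have himg : ∑ j ∈ Finset.univ.image φ, 𝒦 (m, n0) (c, j) * 𝒦 (l, n0) (c, j)
          = ∑ j' : Fin (2*r+1), 𝒦 (m, n0) (c, φ j') * 𝒦 (l, n0) (c, φ j') :=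
        Finset.sum_image (fun x _ y _ h => hφ h)
      have hsub : ∑ j : Fin (S*N), 𝒦 (m, n0) (c, j) * 𝒦 (l, n0) (c, j)
          = ∑ j ∈ Finset.univ.image φ, 𝒦 (m, n0) (c, j) * 𝒦 (l, n0) (c, j) := by
        refine (Finset.sum_subset (Finset.subset_univ _) ?_).symm
        intro j _ hj
        have : ∀ j', j ≠ φ j' := by
          intro j' h
          exact hj (Finset.mem_image.mpr ⟨j', Finset.mem_univ _, h.symm⟩)
        rw [hzero m c j this, zero_mul]
      rw [hsub, himg]
      exact Finset.sum_congr rfl fun j' _ => by rw [heval, heval]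
    rw [Fintype.sum_prod_type] at h1 ⊢
    simp only [hsum] at h1
    rw [h1]
    rw [Matrix.one_apply, Matrix.one_apply]
    refine if_congr ?_ rfl rfl
    simp [Prod.ext_iff]
  calc M = Fintype.card (Fin M) := (Fintype.card_fin M).symm
    _ = (1 : Matrix (Fin M) (Fin M) ℝ).rank := Matrix.rank_one.symm
    _ = (A * Aᵀ).rank := by rw [hA]
    _ ≤ A.rank := Matrix.rank_mul_le_left A Aᵀ
    _ ≤ Fintype.card (Fin C × Fin (2*r+1)) := Matrix.rank_le_card_width A
    _ = C * (2*r+1) := by simp [Fintype.card_prod]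

open Fin.IntCast in
lemma stmt7_backward (M C r S N : ℕ) [NeZero (S*N)] (hM : M ≤ C*S) (hk : 2*r+1 ≤ S*N)
    (hMk : M ≤ C*(2*r+1)) :
    ∃ K : Fin M → Fin C → Fin (2*r+1) → ℝ,
      layerMat M C r S N K * (layerMat M C r S N K)ᵀ = 1 := by
  have hS : 0 < S := Nat.pos_of_ne_zero (by rintro rfl; exact (NeZero.ne (0*N)) (by simp))
  have hN : 0 < N := Nat.pos_of_ne_zero (by rintro rfl; exact (NeZero.ne (S*0)) (by simp))
  set t : ℕ := min S (2*r+1) with htdef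
  have ht0 : 0 < t := lt_min hS (by omega)
  have hMt : M ≤ C * t := by
    rcases le_total S (2*r+1) with h | h
    · rw [htdef, min_eq_left h]; exact hM
    · rw [htdef, min_eq_right h]; exact hMk
  set sm : Fin M → ℕ := fun m => (m : ℕ) % t with hsmdef
  set cm : Fin M → ℕ := fun m => (m : ℕ) / t with hcmdef
  have hsmS : ∀ m, sm m < S := fun m => lt_of_lt_of_le (Nat.mod_lt _ ht0) (min_le_left _ _)
  have hsmk : ∀ m, sm m < 2*r+1 := fun m => lt_of_lt_of_le (Nat.mod_lt _ ht0) (min_le_right _ _)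
  have hcm : ∀ m, cm m < C := fun m =>
    (Nat.div_lt_iff_lt_mul ht0).mpr (lt_of_lt_of_le m.isLt hMt)
  set c0 : Fin M → Fin C := fun m => ⟨cm m, hcm m⟩ with hc0def
  set j0 : Fin M → Fin (2*r+1) := fun m => ⟨sm m, hsmk m⟩ with hj0def
  set ψ : Fin M → Fin N → Fin (S*N) := fun m n =>
    ((((S : ℤ) * ((n : ℕ) : ℤ) + (((j0 m : ℕ)) : ℤ) - ((r : ℕ) : ℤ)) : ℤ) : Fin (S*N)) with hψdef
  set K : Fin M → Fin C → Fin (2*r+1) → ℝ :=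
    fun m c j => if c = c0 m ∧ j = j0 m then 1 else 0 with hKdef
  refine ⟨K, ?_⟩
  have hent : ∀ (m : Fin M) (n : Fin N) (q : Fin C × Fin (S*N)),
      layerMat M C r S N K (m, n) q = if q = (c0 m, ψ m n) then 1 else 0 := by
    rintro m n ⟨c, j⟩
    rw [layerMat_apply]
    have step : ∀ j' : Fin (2*r+1),
        (if ((S*N : ℕ) : ℤ) ∣ ((S : ℤ) * ((n : ℕ) : ℤ) + ((j' : ℕ) : ℤ) - ((r : ℕ) : ℤ) - ((j : ℕ) : ℤ))
         then K m c j' else 0)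
        = if j' = j0 m then
            (if c = c0 m ∧
                ((S*N : ℕ) : ℤ) ∣ ((S : ℤ) * ((n : ℕ) : ℤ) + ((j' : ℕ) : ℤ) - ((r : ℕ) : ℤ) - ((j : ℕ) : ℤ))
             then (1:ℝ) else 0) else 0 := by
      intro j'
      by_cases h2 : j' = j0 m <;> by_cases h3 : c = c0 m <;> simp [hKdef, h2, h3]
    simp only [step, Finset.sum_ite_eq', Finset.mem_univ, if_true]
    have hpair : ((c, j) = (c0 m, ψ m n)) ↔ (c = c0 m ∧ j = ψ m n) := Prod.mk.injEq _ _ _ _ ▸ Iff.rfl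
    refine (if_congr (Iff.symm ?_) rfl rfl)
    rw [hpair]
    refine and_congr_right fun _ => ?_
    rw [hψdef]
    exact fin_eq_intCast_iff j _
  ext ⟨m, n⟩ ⟨l, n'⟩
  rw [Matrix.mul_apply]
  simp only [Matrix.transpose_apply, hent, ite_mul, one_mul, zero_mul,
    Finset.sum_ite_eq', Finset.mem_univ, if_true]
  rw [Matrix.one_apply]
  refine if_congr ?_ rfl rfl
  constructor
  · intro h
    rw [Prod.mk.injEq] at h
    obtain ⟨hc, hψeq⟩ := h
    rw [hψdef] at hψeq
    simp only at hψeq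
    rw [finCast_eq_iff] at hψeq
    have hab : ((S : ℤ) * ((n' : ℕ) : ℤ) + (((j0 l : ℕ)) : ℤ) - ((r : ℕ) : ℤ))
        - ((S : ℤ) * ((n : ℕ) : ℤ) + (((j0 m : ℕ)) : ℤ) - ((r : ℕ) : ℤ))
        = ((S * (n' : ℕ) + sm l : ℕ) : ℤ) - ((S * (n : ℕ) + sm m : ℕ) : ℤ) := by
      push_cast [hj0def]; ring
    rw [hab] at hψeq
    have hb1 : S * (n : ℕ) + sm m < S * N := by
      calc S * (n : ℕ) + sm m < S * (n : ℕ) + S := by have := hsmS m; omega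
        _ = S * ((n : ℕ) + 1) := by ring
        _ ≤ S * N := Nat.mul_le_mul_left S n.isLt
    have hb2 : S * (n' : ℕ) + sm l < S * N := by
      calc S * (n' : ℕ) + sm l < S * (n' : ℕ) + S := by have := hsmS l; omega
        _ = S * ((n' : ℕ) + 1) := by ring
        _ ≤ S * N := Nat.mul_le_mul_left S n'.isLt
    have h0 := Int.eq_zero_of_dvd_of_natAbs_lt_natAbs hψeq (by omega)
    have heq : S * (n : ℕ) + sm m = S * (n' : ℕ) + sm l := by omega
    have hdiv1 : (S * (n : ℕ) + sm m) / S = (n : ℕ) := by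
      rw [Nat.mul_add_div hS, Nat.div_eq_of_lt (hsmS m), Nat.add_zero]
    have hdiv2 : (S * (n' : ℕ) + sm l) / S = (n' : ℕ) := by
      rw [Nat.mul_add_div hS, Nat.div_eq_of_lt (hsmS l), Nat.add_zero]
    have hn : (n : ℕ) = (n' : ℕ) := by rw [← hdiv1, ← hdiv2, heq]
    have hsm : sm m = sm l := by rw [hn] at heq; omega
    have hcmeq : cm m = cm l := by
      have := hc
      rw [hc0def] at this
      simpa [Fin.mk.injEq] using this
    have hml : (m : ℕ) = (l : ℕ) := by
      have e1 := Nat.div_add_mod (m : ℕ) t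
      have e2 := Nat.div_add_mod (l : ℕ) t
      have hcm' : (m : ℕ) / t = (l : ℕ) / t := hcmeq
      have hsm' : (m : ℕ) % t = (l : ℕ) % t := hsm
      rw [hcm'] at e1
      omega
    rw [Prod.mk.injEq]
    exact ⟨Fin.ext hml, Fin.ext hn⟩
  · intro h
    rw [Prod.mk.injEq] at h
    rw [h.1, h.2]

/-- existence, 1D RO case: for `M ≤ CS` and `SN ≥ k`, there exists a kernel
tensor whose circular layer transform matrix satisfies `𝒦𝒦ᵀ = I_{MN}` iff `M ≤ Ck`. -/
theorem stmt7 (M C r S N : ℕ) [NeZero (S*N)] (hM : M ≤ C*S) (hk : 2*r+1 ≤ S*N) :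
    (∃ K : Fin M → Fin C → Fin (2*r+1) → ℝ,
        layerMat M C r S N K * (layerMat M C r S N K)ᵀ = 1) ↔
      M ≤ C*(2*r+1) :=
  ⟨fun ⟨K, hK⟩ => stmt7_forward M C r S N hk K hK, stmt7_backward M C r S N hM hk⟩
end

section
/- Let K ∈ ℝ^{M×C×k}, k = 2r+1, P = ⌊(k−1)/S⌋·S, and N with SN ≥ 2k−1. The matrix 𝒦𝒦ᵀ − I_{MN} is a block matrix whose (m,l) block equals C(Q_{S,N}(x_{m,l})), where x_{m,l} = Σ_{c=1}^C conv(K_{m,c}, K_{l,c}, padding = P, stride = S) − δ_{m=l} z_{P/S} ∈ ℝ^{2P/S+1} and z_{P/S} is the vector with 1 at the central index P/S and 0 elsewhere. -/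
open Matrix BigOperators

section Aux

open Fin.IntCast Fin.CommRing

lemma cast_eq_iff (n : ℕ) [NeZero n] (a b : ℤ) : ((a : Fin n) = (b : Fin n)) ↔ (n:ℤ) ∣ (b - a) := by
  rw [CharP.intCast_eq_intCast (Fin n) n, Int.ModEq]
  exact ⟨fun h => Int.ModEq.dvd h, fun h => Int.modEq_iff_dvd.mpr h⟩

lemma key (r n : ℕ) [NeZero n] (h g : Fin (2*r+1) → ℝ) (a b : ℕ) (ha : a < n) (hb : b < n) :
    ∑ k : Fin n, Pemb r n h (⟨a, ha⟩ - k) * Pemb r n g (⟨b, hb⟩ - k)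
    = ∑ j : Fin (2*r+1), ∑ j' : Fin (2*r+1),
        if (n:ℤ) ∣ ((a:ℤ) + j) - ((b:ℤ) + j') then h j * g j' else 0 := by
  simp only [Pemb, Finset.sum_mul_sum]
  rw [Finset.sum_comm]
  refine Finset.sum_congr rfl (fun j _ => ?_)
  rw [Finset.sum_comm]
  refine Finset.sum_congr rfl (fun j' _ => ?_)
  have : ∀ k : Fin n,
      (if (⟨a, ha⟩ : Fin n) - k = (((r:ℤ) - (j:ℤ) : ℤ) : Fin n) then h j else 0) *
      (if (⟨b, hb⟩ : Fin n) - k = (((r:ℤ) - (j':ℤ) : ℤ) : Fin n) then g j' else 0)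
      = if k = (⟨a, ha⟩ : Fin n) - (((r:ℤ) - (j:ℤ) : ℤ) : Fin n) ∧
           (⟨b, hb⟩ : Fin n) - k = (((r:ℤ) - (j':ℤ) : ℤ) : Fin n) then h j * g j' else 0 := by
    intro k
    rw [ite_zero_mul_ite_zero]
    refine if_congr ?_ rfl rfl
    constructor
    · rintro ⟨h1, h2⟩; exact ⟨by rw [← h1]; abel, h2⟩
    · rintro ⟨h1, h2⟩; exact ⟨by rw [h1]; abel, h2⟩
  simp only [this, ite_and, Finset.sum_ite_eq']
  simp only [Finset.mem_univ, if_true]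
  have hfa : (⟨a, ha⟩ : Fin n) = ((a:ℤ) : Fin n) := by
    ext; simp [Nat.mod_eq_of_lt ha]
  have hfb : (⟨b, hb⟩ : Fin n) = ((b:ℤ) : Fin n) := by
    ext; simp [Nat.mod_eq_of_lt hb]
  rw [hfa, hfb]
  have heq : ((b:ℤ) : Fin n) - (((a:ℤ) : Fin n) - (((r:ℤ) - (j:ℤ) : ℤ) : Fin n))
      = (((b:ℤ) - (a:ℤ) + ((r:ℤ) - (j:ℤ)) : ℤ) : Fin n) := by push_cast; ring
  rw [heq]
  simp only [cast_eq_iff]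
  refine if_congr ?_ rfl rfl
  exact iff_of_eq (congrArg _ (by ring))

lemma core (r S N : ℕ) (hS : 0 < S) (hN : 4*r+1 ≤ S*N) (i i' : Fin N)
    (j : Fin (2*r+1)) (g : Fin (2*r+1) → ℝ) :
    (∑ t : Fin (2*((2*r)/S)+1),
      if (N:ℤ) ∣ ((t:ℤ) - ((2*r)/S : ℕ)) - ((i:ℤ) - (i':ℤ)) then
        (if hd : ((2*r)/S)*S ≤ S * (t : ℕ) + (j : ℕ) ∧
               S * (t : ℕ) + (j : ℕ) ≤ ((2*r)/S)*S + 2*r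
         then g ⟨S * (t : ℕ) + (j : ℕ) - ((2*r)/S)*S, by omega⟩ else 0)
      else 0)
    = ∑ j' : Fin (2*r+1),
        if ((S*N:ℕ):ℤ) ∣ ((S:ℤ)*(i:ℤ) + (j:ℤ)) - ((S:ℤ)*(i':ℤ) + (j':ℤ)) then g j' else 0 := by
  set q : ℕ := (2*r)/S with hq
  have hqS : q*S ≤ 2*r := Nat.div_mul_le_self _ _
  have hqS2 : 2*r < q*S + S := by
    have h1 := Nat.div_add_mod' (2*r) S
    rw [← hq] at h1
    have h2 := Nat.mod_lt (2*r) hS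
    omega
  have hd : ∀ t : Fin (2*q+1),
      (if hd : q*S ≤ S * (t : ℕ) + (j : ℕ) ∧ S * (t : ℕ) + (j : ℕ) ≤ q*S + 2*r
         then g ⟨S * (t : ℕ) + (j : ℕ) - q*S, by omega⟩ else 0)
      = ∑ j' : Fin (2*r+1),
          if (q*S ≤ S * (t : ℕ) + (j : ℕ) ∧ S * (t : ℕ) + (j : ℕ) ≤ q*S + 2*r)
             ∧ (j' : ℕ) = S * (t : ℕ) + (j : ℕ) - q*S then g j' else 0 := by
    intro t
    by_cases hb : q*S ≤ S * (t : ℕ) + (j : ℕ) ∧ S * (t : ℕ) + (j : ℕ) ≤ q*S + 2*r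
    · rw [dif_pos hb]
      rw [Finset.sum_eq_single (⟨S * (t : ℕ) + (j : ℕ) - q*S, by omega⟩ : Fin (2*r+1))]
      · rw [if_pos ⟨hb, rfl⟩]
      · intro b _ hb2
        rw [if_neg]
        rintro ⟨-, h2⟩
        exact hb2 (Fin.ext h2)
      · simp
    · rw [dif_neg hb]
      rw [Finset.sum_eq_zero]
      intro b _
      rw [if_neg]
      rintro ⟨h1, -⟩
      exact hb h1
  simp only [← hq, hd]
  have hpush : ∀ t : Fin (2*q+1),
      (if (N:ℤ) ∣ ((t:ℤ) - (q:ℕ)) - ((i:ℤ) - (i':ℤ)) then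
        (∑ j' : Fin (2*r+1),
          if (q*S ≤ S * (t : ℕ) + (j : ℕ) ∧ S * (t : ℕ) + (j : ℕ) ≤ q*S + 2*r)
             ∧ (j' : ℕ) = S * (t : ℕ) + (j : ℕ) - q*S then g j' else 0)
      else 0)
      = ∑ j' : Fin (2*r+1),
          if ((N:ℤ) ∣ ((t:ℤ) - (q:ℕ)) - ((i:ℤ) - (i':ℤ)))
             ∧ (q*S ≤ S * (t : ℕ) + (j : ℕ) ∧ S * (t : ℕ) + (j : ℕ) ≤ q*S + 2*r)
             ∧ (j' : ℕ) = S * (t : ℕ) + (j : ℕ) - q*S then g j' else 0 := by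
    intro t
    by_cases hc : (N:ℤ) ∣ ((t:ℤ) - (q:ℕ)) - ((i:ℤ) - (i':ℤ))
    · rw [if_pos hc]
      exact Finset.sum_congr rfl fun j' _ => by
        by_cases h2 : (q*S ≤ S * (t : ℕ) + (j : ℕ) ∧ S * (t : ℕ) + (j : ℕ) ≤ q*S + 2*r)
             ∧ (j' : ℕ) = S * (t : ℕ) + (j : ℕ) - q*S
        · rw [if_pos h2, if_pos ⟨hc, h2⟩]
        · rw [if_neg h2, if_neg (fun h => h2 h.2)]
    · rw [if_neg hc, eq_comm]
      exact Finset.sum_eq_zero fun j' _ => if_neg (fun h => hc h.1)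
  simp only [hpush]
  rw [Finset.sum_comm]
  refine Finset.sum_congr rfl fun j' _ => ?_
  by_cases hQ : ((S*N:ℕ):ℤ) ∣ ((S:ℤ)*(i:ℤ) + (j:ℤ)) - ((S:ℤ)*(i':ℤ) + (j':ℤ))
  · rw [if_pos hQ]
    obtain ⟨e, he⟩ := hQ
    set w : ℤ := (q:ℤ) + (i:ℤ) - (i':ℤ) - e*(N:ℤ) with hwdef
    have hzq : ((q*S:ℕ):ℤ) = (q:ℤ)*(S:ℤ) := by push_cast; ring
    have hw : (S:ℤ)*w = (q:ℤ)*S + (j':ℤ) - (j:ℤ) := by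
      rw [hwdef]; push_cast at he ⊢; linear_combination he
    have hj2 : (j:ℤ) ≤ 2*r := by exact_mod_cast Nat.le_of_lt_succ j.2
    have hj'2 : (j':ℤ) ≤ 2*r := by exact_mod_cast Nat.le_of_lt_succ j'.2
    have hj0 : (0:ℤ) ≤ (j:ℤ) := Int.natCast_nonneg _
    have hj'0 : (0:ℤ) ≤ (j':ℤ) := Int.natCast_nonneg _
    have hz1 : (q:ℤ)*S ≤ 2*r := by exact_mod_cast hqS
    have hz2 : (2*r:ℤ) < (q:ℤ)*S + S := by exact_mod_cast hqS2
    have hw0 : 0 ≤ w := by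
      by_contra hneg
      push_neg at hneg
      have h1 : w ≤ -1 := by omega
      have h2 : (S:ℤ)*w ≤ (S:ℤ)*(-1) :=
        mul_le_mul_of_nonneg_left h1 (by exact_mod_cast hS.le)
      have h3 : (S:ℤ)*(-1) = -(S:ℤ) := by ring
      linarith
    have hw2 : w ≤ 2*(q:ℤ) := by
      by_contra hgt
      push_neg at hgt
      have h1 : 2*(q:ℤ)+1 ≤ w := by omega
      have h2 : (S:ℤ)*(2*(q:ℤ)+1) ≤ (S:ℤ)*w :=
        mul_le_mul_of_nonneg_left h1 (by exact_mod_cast hS.le)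
      nlinarith
    have ht0lt : w.toNat < 2*q+1 := by omega
    have ht0 : ((w.toNat : ℕ):ℤ) = w := Int.toNat_of_nonneg hw0
    set tf : Fin (2*q+1) := ⟨w.toNat, ht0lt⟩ with htf
    have hSt : ((S*(tf:ℕ):ℕ):ℤ) = (q:ℤ)*S + (j':ℤ) - (j:ℤ) := by
      push_cast [htf]; rw [ht0]; linarith
    have hlow : q*S ≤ S*(tf:ℕ) + (j:ℕ) := by
      have : ((q*S:ℕ):ℤ) ≤ ((S*(tf:ℕ) + (j:ℕ) : ℕ):ℤ) := by push_cast; push_cast at hSt; linarith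
      exact_mod_cast this
    have hhigh : S*(tf:ℕ) + (j:ℕ) ≤ q*S + 2*r := by
      have : ((S*(tf:ℕ) + (j:ℕ) : ℕ):ℤ) ≤ ((q*S + 2*r : ℕ):ℤ) := by push_cast; push_cast at hSt; linarith
      exact_mod_cast this
    have hjeq : (j':ℕ) = S*(tf:ℕ) + (j:ℕ) - q*S := by
      have h1 : (j':ℕ) + q*S = S*(tf:ℕ) + (j:ℕ) := by
        have : ((j' + q*S:ℕ):ℤ) = ((S*(tf:ℕ) + (j:ℕ):ℕ):ℤ) := by push_cast; push_cast at hSt; linarith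
        exact_mod_cast this
      omega
    rw [Finset.sum_eq_single tf]
    · rw [if_pos]
      refine ⟨⟨-e, ?_⟩, ⟨hlow, hhigh⟩, hjeq⟩
      rw [htf]
      show ((w.toNat:ℕ):ℤ) - (q:ℕ) - ((i:ℤ) - (i':ℤ)) = (N:ℤ)*(-e)
      rw [ht0, hwdef]; push_cast; ring
    · intro b _ hbne
      rw [if_neg]
      rintro ⟨-, ⟨hb1, -⟩, hb3⟩
      apply hbne
      have hb4 : (j':ℕ) + q*S = S*(b:ℕ) + (j:ℕ) := by omega
      have hb5 : (j':ℕ) + q*S = S*(tf:ℕ) + (j:ℕ) := by omega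
      have : S*(b:ℕ) = S*(tf:ℕ) := by omega
      exact Fin.ext (Nat.eq_of_mul_eq_mul_left hS this)
    · simp
  · rw [if_neg hQ, Finset.sum_eq_zero]
    intro t _
    rw [if_neg]
    rintro ⟨⟨f, hf⟩, ⟨hb1, -⟩, hb3⟩
    apply hQ
    refine ⟨-f, ?_⟩
    have hb4 : (j':ℕ) + q*S = S*(t:ℕ) + (j:ℕ) := by omega
    have hb5 : ((j':ℕ):ℤ) + (q:ℤ)*S = (S:ℤ)*(t:ℕ) + (j:ℤ) := by exact_mod_cast hb4
    push_cast
    linear_combination (-(S:ℤ)) * hf - hb5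

lemma delta_sum (q N : ℕ) [NeZero N] (P : Prop) [Decidable P] (i i' : Fin N) :
    (∑ t : Fin (2*q+1),
      if (N:ℤ) ∣ ((t:ℤ) - (q:ℤ)) - ((i:ℤ) - (i':ℤ)) then
        (if P ∧ (t : ℕ) = q then (1:ℝ) else 0) else 0)
    = if P ∧ i = i' then 1 else 0 := by
  rw [Finset.sum_eq_single (⟨q, by omega⟩ : Fin (2*q+1))]
  · have hii : ((N:ℤ) ∣ ((⟨q, by omega⟩ : Fin (2*q+1)) : ℤ) - (q:ℤ) - ((i:ℤ) - (i':ℤ))) ↔ i = i' := by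
      have h1 : (((⟨q, by omega⟩ : Fin (2*q+1)) : ℕ) : ℤ) = (q:ℤ) := rfl
      rw [h1]
      have h2 : (q:ℤ) - q - ((i:ℤ) - i') = (i':ℤ) - i := by ring
      rw [h2]
      have hi : (((i:ℕ):ℤ) : Fin N) = i := by
        rw [Int.cast_natCast, Fin.cast_val_eq_self]
      have hi' : (((i':ℕ):ℤ) : Fin N) = i' := by
        rw [Int.cast_natCast, Fin.cast_val_eq_self]
      constructor
      · intro h
        have h3 : (((i:ℤ)) : Fin N) = (((i':ℤ)) : Fin N) := (cast_eq_iff N _ _).mpr h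
        rw [hi, hi'] at h3; exact h3
      · rintro rfl; simp
    simp only [hii]
    by_cases hP : P <;> by_cases hii' : i = i' <;> simp [hP, hii']
  · intro b _ hbne
    have h0 : (if P ∧ (b:ℕ) = q then (1:ℝ) else 0) = 0 :=
      if_neg (fun h => hbne (Fin.ext (by simpa using h.2)))
    rw [h0, ite_self]
  · simp

lemma rhs_eq (M C r S N : ℕ) [NeZero N] (hS : 0 < S) (hN : 4*r+1 ≤ S*N)
    (K : Fin M → Fin C → Fin (2*r+1) → ℝ) (m l : Fin M) (i i' : Fin N) :
    Matrix.circulant (Qemb ((2*r)/S) N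
          (fun t => (∑ c : Fin C, convPS r S (K m c) (K l c) t) -
            (if m = l ∧ (t : ℕ) = (2*r)/S then 1 else 0))) i i'
    = (∑ c : Fin C, ∑ j : Fin (2*r+1), ∑ j' : Fin (2*r+1),
        if ((S*N:ℕ):ℤ) ∣ ((S:ℤ)*(i:ℤ) + (j:ℤ)) - ((S:ℤ)*(i':ℤ) + (j':ℤ))
        then K m c j * K l c j' else 0)
      - (if (m,i) = (l,i') then 1 else 0) := by
  set q : ℕ := (2*r)/S with hq
  rw [Matrix.circulant_apply]
  show (∑ t : Fin (2*q+1), if (i - i' : Fin N) = (((t:ℤ) - (q:ℤ) : ℤ) : Fin N) then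
      ((∑ c : Fin C, convPS r S (K m c) (K l c) t) -
        (if m = l ∧ (t : ℕ) = q then 1 else 0)) else 0) = _
  have hii : (i - i' : Fin N) = ((((i:ℕ):ℤ) - ((i':ℕ):ℤ) : ℤ) : Fin N) := by
    push_cast [Fin.cast_val_eq_self]
    rfl
  have hcond : ∀ t : Fin (2*q+1),
      ((i - i' : Fin N) = (((t:ℤ) - (q:ℤ) : ℤ) : Fin N)) ↔
      ((N:ℤ) ∣ ((t:ℤ) - (q:ℕ)) - ((i:ℤ) - (i':ℤ))) := by
    intro t
    rw [hii, cast_eq_iff]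
  simp only [hcond]
  have hsplit : ∀ t : Fin (2*q+1),
      (if (N:ℤ) ∣ ((t:ℤ) - (q:ℕ)) - ((i:ℤ) - (i':ℤ)) then
        ((∑ c : Fin C, convPS r S (K m c) (K l c) t) -
          (if m = l ∧ (t : ℕ) = q then 1 else 0)) else 0)
      = (∑ c : Fin C, if (N:ℤ) ∣ ((t:ℤ) - (q:ℕ)) - ((i:ℤ) - (i':ℤ)) then
            convPS r S (K m c) (K l c) t else 0)
        - (if (N:ℤ) ∣ ((t:ℤ) - (q:ℕ)) - ((i:ℤ) - (i':ℤ)) then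
            (if m = l ∧ (t : ℕ) = q then (1:ℝ) else 0) else 0) := by
    intro t
    by_cases hc : (N:ℤ) ∣ ((t:ℤ) - (q:ℕ)) - ((i:ℤ) - (i':ℤ)) <;> simp [hc]
  simp only [hsplit, Finset.sum_sub_distrib]
  rw [delta_sum q N (m = l) i i']
  congr 1
  · rw [Finset.sum_comm]
    refine Finset.sum_congr rfl fun c _ => ?_
    have hconv : ∀ t : Fin (2*q+1),
        (if (N:ℤ) ∣ ((t:ℤ) - (q:ℕ)) - ((i:ℤ) - (i':ℤ)) then
            convPS r S (K m c) (K l c) t else 0)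
        = ∑ j : Fin (2*r+1), (K m c j) *
            (if (N:ℤ) ∣ ((t:ℤ) - (q:ℕ)) - ((i:ℤ) - (i':ℤ)) then
              (if hd : q*S ≤ S * (t : ℕ) + (j : ℕ) ∧
                   S * (t : ℕ) + (j : ℕ) ≤ q*S + 2*r
               then K l c ⟨S * (t : ℕ) + (j : ℕ) - q*S, by omega⟩ else 0)
             else 0) := by
      intro t
      by_cases hc : (N:ℤ) ∣ ((t:ℤ) - (q:ℕ)) - ((i:ℤ) - (i':ℤ))
      · simp only [if_pos hc, convPS]; rfl
      · simp [hc]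
    simp only [hconv]
    rw [Finset.sum_comm]
    refine Finset.sum_congr rfl fun j _ => ?_
    rw [← Finset.mul_sum, core r S N hS hN i i' j (K l c), Finset.mul_sum]
    refine Finset.sum_congr rfl fun j' _ => ?_
    by_cases hc : ((S*N:ℕ):ℤ) ∣ ((S:ℤ)*(i:ℤ) + (j:ℤ)) - ((S:ℤ)*(i':ℤ) + (j':ℤ)) <;>
      simp [hc]
  · simp [Prod.ext_iff]

end Aux

/-- for `SN ≥ 2k−1`, the `(m,l)` block of `𝒦𝒦ᵀ − I_{MN}` equals
`C(Q_{S,N}(x_{m,l}))`, where `x_{m,l} = Σ_c conv(K_{m,c},K_{l,c},padding P,stride S) − δ_{m=l} z_{P/S}`. -/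
theorem stmt13 (M C r S N : ℕ) [NeZero (S*N)] [NeZero N] (hN : 4*r+1 ≤ S*N)
    (K : Fin M → Fin C → Fin (2*r+1) → ℝ) (m l : Fin M) (i i' : Fin N) :
    (layerMat M C r S N K * (layerMat M C r S N K)ᵀ - 1 :
        Matrix (Fin M × Fin N) (Fin M × Fin N) ℝ) (m, i) (l, i')
      = Matrix.circulant (Qemb ((2*r)/S) N
          (fun t => (∑ c : Fin C, convPS r S (K m c) (K l c) t) -
            (if m = l ∧ (t : ℕ) = (2*r)/S then 1 else 0))) i i' := by
  have hS : 0 < S := Nat.pos_of_ne_zero (by rintro rfl; exact (NeZero.ne (0*N)) (by ring))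
  have hsi : S * (i:ℕ) < S * N := (Nat.mul_lt_mul_left hS).mpr i.2
  have hsi' : S * (i':ℕ) < S * N := (Nat.mul_lt_mul_left hS).mpr i'.2
  have hsamp : ∀ (v : Fin (S*N) → ℝ) (a : Fin N) (ha : S * (a:ℕ) < S * N) (b : Fin (S*N)),
      (samp S N * Matrix.circulant v) a b = v (⟨S*(a:ℕ), ha⟩ - b) := by
    intro v a ha b
    rw [Matrix.mul_apply]
    rw [Finset.sum_eq_single (⟨S*(a:ℕ), ha⟩ : Fin (S*N))]
    · simp [samp, Matrix.circulant_apply]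
    · intro c _ hc; simp only [samp, Matrix.of_apply]
      rw [if_neg, zero_mul]
      intro h; exact hc (Fin.ext h)
    · simp
  have hl1 : ∀ (a : Fin M) (c : Fin C) (k : Fin (S*N)),
      layerMat M C r S N K (a, i) (c, k) = Pemb r (S*N) (K a c) (⟨S*(i:ℕ), hsi⟩ - k) := by
    intro a c k; exact hsamp _ _ hsi k
  have hl2 : ∀ (a : Fin M) (c : Fin C) (k : Fin (S*N)),
      layerMat M C r S N K (a, i') (c, k) = Pemb r (S*N) (K a c) (⟨S*(i':ℕ), hsi'⟩ - k) := by
    intro a c k; exact hsamp _ _ hsi' k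
  simp only [Matrix.sub_apply, Matrix.mul_apply, Matrix.one_apply,
    Matrix.transpose_apply, Fintype.sum_prod_type, hl1, hl2]
  rw [rhs_eq M C r S N hS hN K m l i i']
  congr 1
  refine Finset.sum_congr rfl fun c _ => ?_
  rw [key r (S*N) (K m c) (K l c) (S*(i:ℕ)) (S*(i':ℕ)) hsi hsi']
  refine Finset.sum_congr rfl fun j _ => ?_
  refine Finset.sum_congr rfl fun j' _ => ?_
  refine if_congr ?_ rfl rfl
  constructor
  · intro h; convert h using 2 <;> push_cast <;> ring
  · intro h; convert h using 2 <;> push_cast <;> ring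
end

section
/- (Frobenius stability, 1D, RO case.) Let K ∈ ℝ^{M×C×k}, k odd, P = ⌊(k−1)/S⌋·S, and N with SN ≥ 2k−1. Then ‖𝒦𝒦ᵀ − I_{MN}‖_F² = N · ‖CONV(K, K, padding = P, stride = S) − I_{r0}‖_F², where CONV(K,K,·)_{m,l,:} = Σ_{c=1}^C conv(K_{m,c}, K_{l,c}, padding = P, stride = S) and I_{r0} ∈ ℝ^{M×M×(2P/S+1)} is zero except [I_{r0}]_{m,m,P/S} = 1. -/
open Matrix BigOperators

open Fin.IntCast Fin.CommRing in
theorem fin_cast_eq_iff (n : ℕ) [NeZero n] (x : ℤ) (d : Fin n) :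
    (x : Fin n) = d ↔ (n:ℤ) ∣ x - (d : ℕ) := by
  rw [← CharP.intCast_eq_zero_iff (Fin n) n, Int.cast_sub, Int.cast_natCast,
    Fin.cast_val_eq_self, sub_eq_zero]

theorem samp_mul_circ (S N : ℕ) [NeZero (S*N)] (v : Fin (S*N) → ℝ) (i : Fin N)
    (q : Fin (S*N)) (hi : S*(i:ℕ) < S*N) :
    (samp S N * Matrix.circulant v) i q = v (⟨S*(i:ℕ), hi⟩ - q) := by
  rw [Matrix.mul_apply]
  have hiff : ∀ j' : Fin (S*N), ((j':ℕ) = S*(i:ℕ)) ↔ j' = ⟨S*(i:ℕ), hi⟩ := by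
    intro j'; rw [Fin.ext_iff]
  simp only [samp, Matrix.circulant_apply, Matrix.of_apply, hiff, ite_mul, one_mul, zero_mul]
  rw [Finset.sum_ite_eq' Finset.univ (⟨S*(i:ℕ), hi⟩ : Fin (S*N))]
  simp

open Fin.IntCast Fin.CommRing in
theorem corr_eq (n r : ℕ) [NeZero n] (h g : Fin (2*r+1) → ℝ) (d : Fin n) :
    ∑ q : Fin n, Pemb r n h (d + q) * Pemb r n g q
      = ∑ a : Fin (2*r+1), ∑ b : Fin (2*r+1),
          if ((((b:ℕ):ℤ) - ((a:ℕ):ℤ) : ℤ) : Fin n) = d then h a * g b else 0 := by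
  unfold Pemb
  have key : ∀ a b : Fin (2*r+1),
      ((d + (((r:ℤ) - (b:ℤ) : ℤ) : Fin n) = (((r:ℤ) - (a:ℤ) : ℤ) : Fin n))
        ↔ (((((b:ℕ):ℤ) - ((a:ℕ):ℤ)) : ℤ) : Fin n) = d) := by
    intro a b
    push_cast
    constructor <;> intro hh <;> linear_combination -hh
  simp only [Finset.sum_mul_sum, ite_zero_mul_ite_zero]
  rw [Finset.sum_comm]
  refine Finset.sum_congr rfl fun a _ => ?_
  rw [Finset.sum_comm]
  refine Finset.sum_congr rfl fun b _ => ?_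
  simp only [and_comm (a := d + _ = _), ite_and]
  rw [Finset.sum_ite_eq' Finset.univ]
  simp only [Finset.mem_univ, if_true]
  rw [if_congr (key a b) rfl rfl]

theorem conv_eq (r S : ℕ) (h g : Fin (2*r+1) → ℝ) (t : Fin (2*((2*r)/S)+1)) :
    convPS r S h g t
      = ∑ a : Fin (2*r+1), ∑ b : Fin (2*r+1),
          if (b:ℕ) + ((2*r)/S)*S = S*(t:ℕ) + (a:ℕ) then h a * g b else 0 := by
  unfold convPS
  refine Finset.sum_congr rfl fun a _ => ?_
  split
  · rename_i hd
    have hiff : ∀ b : Fin (2*r+1),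
        ((b:ℕ) + ((2*r)/S)*S = S*(t:ℕ) + (a:ℕ)) ↔
          b = (⟨S*(t:ℕ) + (a:ℕ) - ((2*r)/S)*S, by omega⟩ : Fin (2*r+1)) := by
      intro b; rw [Fin.ext_iff]; simp only []; omega
    simp only [hiff]
    rw [Finset.sum_ite_eq' Finset.univ]
    simp
  · rename_i hd
    rw [mul_zero, eq_comm]
    refine Finset.sum_eq_zero fun b _ => ?_
    rw [if_neg]
    intro hb
    exact hd ⟨by omega, by have := b.isLt; omega⟩

theorem si_sub (S N : ℕ) [NeZero (S*N)] (i j : Fin N)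
    (h1 : S*(i:ℕ) < S*N) (h2 : S*(j:ℕ) < S*N) (h3 : S*((i - j : Fin N):ℕ) < S*N) :
    (⟨S*(i:ℕ), h1⟩ - ⟨S*(j:ℕ), h2⟩ : Fin (S*N)) = ⟨S*((i - j : Fin N):ℕ), h3⟩ := by
  haveI : NeZero N := ⟨(Fin.pos i).ne'⟩
  rw [Fin.ext_iff, Fin.sub_def]
  show (S*N - S*(j:ℕ) + S*(i:ℕ)) % (S*N) = S * ((i - j : Fin N):ℕ)
  rw [Fin.sub_def]
  show _ = S * ((N - (j:ℕ) + (i:ℕ)) % N)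
  rw [← Nat.mul_mod_mul_left]
  congr 1
  rw [Nat.mul_add, Nat.mul_sub]

theorem iota_val (q0 N : ℕ) (hN : 2*q0+1 ≤ N) (t : Fin (2*q0+1)) :
    ((t:ℕ) + N - q0) % N = if q0 ≤ (t:ℕ) then (t:ℕ) - q0 else (t:ℕ) + N - q0 := by
  have ht := t.isLt
  split
  · rename_i hc
    rw [show (t:ℕ) + N - q0 = ((t:ℕ) - q0) + N by omega, Nat.add_mod_right,
      Nat.mod_eq_of_lt (by omega)]
  · rename_i hc
    rw [Nat.mod_eq_of_lt (by omega)]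


open Fin.IntCast Fin.CommRing in
set_option maxHeartbeats 2000000 in
/-- Frobenius stability, 1D RO case: for `SN ≥ 2k−1`,
`‖𝒦𝒦ᵀ − I_{MN}‖_F² = N · ‖CONV(K,K,padding = P,stride = S) − I_{r0}‖_F²`. -/
theorem stmt14 (M C r S N : ℕ) [NeZero (S*N)] (hN : 4*r+1 ≤ S*N)
    (K : Fin M → Fin C → Fin (2*r+1) → ℝ) :
    frob2 (layerMat M C r S N K * (layerMat M C r S N K)ᵀ - 1)
      = (N : ℝ) *
        ∑ m : Fin M, ∑ l : Fin M, ∑ t : Fin (2*((2*r)/S)+1),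
          ((∑ c : Fin C, convPS r S (K m c) (K l c) t) -
            (if m = l ∧ (t : ℕ) = (2*r)/S then 1 else 0)) ^ 2 := by

  classical
  have hSN : S*N ≠ 0 := NeZero.ne (S*N)
  have hS : 0 < S := by
    rcases Nat.eq_zero_or_pos S with h | h
    · subst h; simp at hSN
    · exact h
  have hN0 : 0 < N := by
    rcases Nat.eq_zero_or_pos N with h | h
    · subst h; simp at hSN
    · exact h
  haveI : NeZero N := ⟨hN0.ne'⟩
  set q0 := (2*r)/S with hq0def
  obtain ⟨ρ, hρ1, hρ2⟩ : ∃ ρ, S*q0 + ρ = 2*r ∧ ρ < S :=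
    ⟨2*r % S, by rw [hq0def]; exact Nat.div_add_mod (2*r) S, Nat.mod_lt _ hS⟩
  have hq0N : 2*q0 + 1 ≤ N := by
    by_contra hcon
    push_neg at hcon
    have h1 : S*N ≤ S*(2*q0) := Nat.mul_le_mul le_rfl (by omega)
    have h2 : S*(2*q0) = 2*(S*q0) := by ring
    omega
  have hsib : ∀ i : Fin N, S*(i:ℕ) < S*N := fun i => (Nat.mul_lt_mul_left hS).mpr i.isLt
  -- step 1 : entry formula
  have key : ∀ (m l : Fin M) (i j : Fin N),
      (layerMat M C r S N K * (layerMat M C r S N K)ᵀ) (m,i) (l,j)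
        = ∑ c : Fin C, ∑ a : Fin (2*r+1), ∑ b : Fin (2*r+1),
            if ((((b:ℕ):ℤ) - ((a:ℕ):ℤ) : ℤ) : Fin (S*N)) =
                (⟨S*((i - j : Fin N):ℕ), hsib _⟩ : Fin (S*N))
            then K m c a * K l c b else 0 := by
    intro m l i j
    rw [Matrix.mul_apply, Fintype.sum_prod_type]
    refine Finset.sum_congr rfl fun c _ => ?_
    have hL : ∀ (p : Fin M) (ii : Fin N) (q : Fin (S*N)),
        layerMat M C r S N K (p,ii) (c,q)
          = Pemb r (S*N) (K p c) (⟨S*(ii:ℕ), hsib ii⟩ - q) := by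
      intro p ii q
      show (samp S N * Matrix.circulant (Pemb r (S*N) (K p c))) ii q = _
      exact samp_mul_circ S N _ ii q (hsib ii)
    simp only [Matrix.transpose_apply, hL]
    rw [← Equiv.sum_comp (Equiv.subLeft (⟨S*(j:ℕ), hsib j⟩ : Fin (S*N)))
      (fun q => Pemb r (S*N) (K m c) (⟨S*(i:ℕ), hsib i⟩ - q)
        * Pemb r (S*N) (K l c) (⟨S*(j:ℕ), hsib j⟩ - q))]
    simp only [Equiv.subLeft_apply, sub_sub_cancel]
    have harg : ∀ q : Fin (S*N),
        (⟨S*(i:ℕ), hsib i⟩ - (⟨S*(j:ℕ), hsib j⟩ - q) : Fin (S*N))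
          = (⟨S*(i:ℕ), hsib i⟩ - ⟨S*(j:ℕ), hsib j⟩ : Fin (S*N)) + q := by
    
      intro q; ring
    simp only [harg]
    rw [si_sub S N i j (hsib i) (hsib j) (hsib _)]
    exact corr_eq (S*N) r (K m c) (K l c) _
  -- step 2 : per (m,l) reduction
  have main : ∀ (m l : Fin M),
      (∑ i : Fin N, ∑ j : Fin N,
        ((∑ c : Fin C, ∑ a : Fin (2*r+1), ∑ b : Fin (2*r+1),
            if ((((b:ℕ):ℤ) - ((a:ℕ):ℤ) : ℤ) : Fin (S*N)) =
                (⟨S*((i - j : Fin N):ℕ), hsib _⟩ : Fin (S*N))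
            then K m c a * K l c b else 0)
          - (if m = l ∧ i = j then 1 else 0)) ^ 2)
        = (N : ℝ) * ∑ t : Fin (2*q0+1),
            ((∑ c : Fin C, convPS r S (K m c) (K l c) t) -
              (if m = l ∧ (t : ℕ) = q0 then 1 else 0)) ^ 2 := by
    intro m l
    set G : Fin N → ℝ := fun e =>
      ((∑ c : Fin C, ∑ a : Fin (2*r+1), ∑ b : Fin (2*r+1),
          if ((((b:ℕ):ℤ) - ((a:ℕ):ℤ) : ℤ) : Fin (S*N)) =
              (⟨S*(e:ℕ), hsib e⟩ : Fin (S*N))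
          then K m c a * K l c b else 0)
        - (if m = l ∧ e = 0 then 1 else 0)) ^ 2 with hG
    have hGij : ∀ i j : Fin N,
        ((∑ c : Fin C, ∑ a : Fin (2*r+1), ∑ b : Fin (2*r+1),
            if ((((b:ℕ):ℤ) - ((a:ℕ):ℤ) : ℤ) : Fin (S*N)) =
                (⟨S*((i - j : Fin N):ℕ), hsib _⟩ : Fin (S*N))
            then K m c a * K l c b else 0)
          - (if m = l ∧ i = j then 1 else 0)) ^ 2 = G (i - j) := by
      intro i j
      rw [hG]
      simp only []
      congr 2
      exact if_congr (and_congr_right fun _ => sub_eq_zero.symm) rfl rfl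
    -- sum over e
    have hinner : ∑ e : Fin N, G e
        = ∑ t : Fin (2*q0+1),
            ((∑ c : Fin C, convPS r S (K m c) (K l c) t) -
              (if m = l ∧ (t : ℕ) = q0 then 1 else 0)) ^ 2 := by
      set iota : Fin (2*q0+1) → Fin N :=
        fun t => ⟨((t:ℕ) + N - q0) % N, Nat.mod_lt _ hN0⟩ with hiota
      have hval : ∀ t : Fin (2*q0+1),
          ((iota t : Fin N) : ℕ) = if q0 ≤ (t:ℕ) then (t:ℕ) - q0 else (t:ℕ) + N - q0 :=
        fun t => iota_val q0 N hq0N t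
      have hinj : ∀ t1 ∈ Finset.univ, ∀ t2 ∈ Finset.univ, iota t1 = iota t2 → t1 = t2 := by
        intro t1 _ t2 _ h12
        have h1 := hval t1; have h2 := hval t2
        rw [Fin.ext_iff] at h12 ⊢
        rw [h1, h2] at h12
        have ht1 := t1.isLt; have ht2 := t2.isLt
        split_ifs at h12 <;> omega
      have hvan : ∀ e ∈ Finset.univ, e ∉ Finset.image iota Finset.univ → G e = 0 := by
        intro e _ he
        have hrange : q0 < (e:ℕ) ∧ (e:ℕ) + q0 < N := by
          by_contra hcon
          apply he
          rw [Finset.mem_image]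
          rcases le_or_gt (e:ℕ) q0 with hle | hgt
          · refine ⟨⟨q0 + (e:ℕ), by omega⟩, Finset.mem_univ _, ?_⟩
            rw [Fin.ext_iff, hval]
            simp only []
            split <;> omega
          · have hge : N - q0 ≤ (e:ℕ) + q0 + 1 := by omega
            have hge2 : N ≤ (e:ℕ) + q0 := by
              rcases Nat.lt_or_ge ((e:ℕ) + q0) N with h | h
              · exfalso; exact hcon ⟨hgt, h⟩
              · exact h
            refine ⟨⟨(e:ℕ) + q0 - N, by have := e.isLt; omega⟩, Finset.mem_univ _, ?_⟩
            rw [Fin.ext_iff, hval]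
            simp only []
            have := e.isLt
            split <;> omega
        obtain ⟨hlo, hhi⟩ := hrange
        rw [hG]
        simp only []
        have hc : ∀ (a b : Fin (2*r+1)),
            ¬ (((((b:ℕ):ℤ) - ((a:ℕ):ℤ) : ℤ) : Fin (S*N)) =
                (⟨S*(e:ℕ), hsib e⟩ : Fin (S*N))) := by
          intro a b hcond
          rw [fin_cast_eq_iff] at hcond
          have hb := b.isLt; have ha := a.isLt
          have hm1 : S*(q0+1) ≤ S*((e:ℕ)) := Nat.mul_le_mul le_rfl (by omega)
          have hm2 : S*((e:ℕ)) + S*(q0+1) ≤ S*N :=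
            le_of_le_of_eq (Nat.mul_le_mul (le_refl S) (show (e:ℕ) + (q0+1) ≤ N by omega)
              |>.trans_eq rfl |> le_of_eq_of_le (by ring)) rfl
          have he1 : S*(q0+1) = S*q0 + S := by ring
          have hz := Int.eq_zero_of_abs_lt_dvd hcond
            (by rw [abs_lt]; constructor <;> (simp only [Fin.val_mk]; omega))
          simp only [Fin.val_mk] at hz
          omega
        have hzero : (∑ c : Fin C, ∑ a : Fin (2*r+1), ∑ b : Fin (2*r+1),
            if ((((b:ℕ):ℤ) - ((a:ℕ):ℤ) : ℤ) : Fin (S*N)) =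
                (⟨S*(e:ℕ), hsib e⟩ : Fin (S*N))
            then K m c a * K l c b else 0) = 0 :=
          Finset.sum_eq_zero fun c _ => Finset.sum_eq_zero fun a _ =>
            Finset.sum_eq_zero fun b _ => if_neg (hc a b)
        rw [hzero]
        have hne : ¬ (m = l ∧ e = 0) := by
          rintro ⟨-, he0⟩
          rw [he0] at hlo
          simp at hlo
        rw [if_neg hne]
        simp
      rw [← Finset.sum_subset (Finset.subset_univ (Finset.image iota Finset.univ)) hvan]
      rw [Finset.sum_image hinj]
      refine Finset.sum_congr rfl fun t _ => ?_
      rw [hG]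
      simp only []
      have ht := t.isLt
      -- indicator
      have hind : (m = l ∧ iota t = 0) ↔ (m = l ∧ (t:ℕ) = q0) := by
        refine and_congr_right fun _ => ?_
        rw [Fin.ext_iff, hval, Fin.val_zero]
        split <;> omega
      rw [if_congr hind rfl rfl]
      -- sums
      have hsum : ∀ c : Fin C,
          (∑ a : Fin (2*r+1), ∑ b : Fin (2*r+1),
            if ((((b:ℕ):ℤ) - ((a:ℕ):ℤ) : ℤ) : Fin (S*N)) =
                (⟨S*((iota t : Fin N):ℕ), hsib _⟩ : Fin (S*N))
            then K m c a * K l c b else 0)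
          = convPS r S (K m c) (K l c) t := by
        intro c
        rw [conv_eq]
        refine Finset.sum_congr rfl fun a _ => Finset.sum_congr rfl fun b _ => ?_
        refine if_congr ?_ rfl rfl
        show _ ↔ ((b:ℕ) + q0*S = S*(t:ℕ) + (a:ℕ))
        rw [fin_cast_eq_iff]
        simp only [Fin.val_mk]
        rw [hval t]
        have hb := b.isLt; have ha := a.isLt
        by_cases hcase : q0 ≤ (t:ℕ)
        · rw [if_pos hcase]
          have hmul : S*((t:ℕ) - q0) + q0*S = S*(t:ℕ) := by
            zify [hcase]; ring
          have hmb : S*((t:ℕ) - q0) ≤ S*q0 := Nat.mul_le_mul le_rfl (by omega)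
          constructor
          · intro hdvd
            have hz := Int.eq_zero_of_abs_lt_dvd hdvd
              (by rw [abs_lt]; constructor <;> omega)
            omega
          · intro hnat
            have hz : ((b:ℕ):ℤ) - ((a:ℕ):ℤ) - ((S*((t:ℕ) - q0) : ℕ) : ℤ) = 0 := by omega
            rw [hz]; exact dvd_zero _
        · rw [if_neg hcase]
          push_neg at hcase
          have hsplit : S*((t:ℕ) + N - q0) + S*q0 = S*(t:ℕ) + S*N := by
            zify [show q0 ≤ (t:ℕ) + N by omega]; ring
          have hcomm : S*q0 = q0*S := Nat.mul_comm S q0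
          have hmt : S*(t:ℕ) + S ≤ S*q0 := by
            have h1 : S*((t:ℕ)+1) ≤ S*q0 := Nat.mul_le_mul le_rfl (by omega)
            have h2 : S*((t:ℕ)+1) = S*(t:ℕ) + S := by ring
            omega
          constructor
          · intro hdvd
            have hdvd2 : ((S*N : ℕ) : ℤ) ∣
                (((b:ℕ):ℤ) - ((a:ℕ):ℤ) - ((S*((t:ℕ) + N - q0) : ℕ) : ℤ) + ((S*N : ℕ):ℤ)) :=
              dvd_add hdvd dvd_rfl
            have hz := Int.eq_zero_of_abs_lt_dvd hdvd2
              (by rw [abs_lt]; constructor <;> omega)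
            omega
          · intro hnat
            have hz : ((b:ℕ):ℤ) - ((a:ℕ):ℤ) - ((S*((t:ℕ) + N - q0) : ℕ) : ℤ)
                = -((S*N : ℕ):ℤ) := by omega
            rw [hz]
            exact (dvd_neg).mpr dvd_rfl
      rw [Finset.sum_congr rfl fun c _ => hsum c]
    -- assemble
    calc (∑ i : Fin N, ∑ j : Fin N,
        ((∑ c : Fin C, ∑ a : Fin (2*r+1), ∑ b : Fin (2*r+1),
            if ((((b:ℕ):ℤ) - ((a:ℕ):ℤ) : ℤ) : Fin (S*N)) =
                (⟨S*((i - j : Fin N):ℕ), hsib _⟩ : Fin (S*N))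
            then K m c a * K l c b else 0)
          - (if m = l ∧ i = j then 1 else 0)) ^ 2)
        = ∑ i : Fin N, ∑ j : Fin N, G (i - j) :=
          Finset.sum_congr rfl fun i _ => Finset.sum_congr rfl fun j _ => hGij i j
      _ = ∑ _i : Fin N, ∑ e : Fin N, G e := by
          refine Finset.sum_congr rfl fun i _ => ?_
          have := Equiv.sum_comp (Equiv.subLeft i) G
          simpa using this
      _ = (N : ℝ) * ∑ e : Fin N, G e := by
          rw [Finset.sum_const, Finset.card_univ, Fintype.card_fin, nsmul_eq_mul]
      _ = _ := by rw [hinner]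
  -- step 3 : assemble everything
  rw [frob2]
  simp only [Fintype.sum_prod_type]
  calc (∑ m : Fin M, ∑ i : Fin N, ∑ l : Fin M, ∑ j : Fin N,
        ((layerMat M C r S N K * (layerMat M C r S N K)ᵀ - 1 :
            Matrix (Fin M × Fin N) (Fin M × Fin N) ℝ) (m,i) (l,j)) ^ 2)
      = ∑ m : Fin M, ∑ l : Fin M, ∑ i : Fin N, ∑ j : Fin N,
        ((∑ c : Fin C, ∑ a : Fin (2*r+1), ∑ b : Fin (2*r+1),
            if ((((b:ℕ):ℤ) - ((a:ℕ):ℤ) : ℤ) : Fin (S*N)) =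
                (⟨S*((i - j : Fin N):ℕ), hsib _⟩ : Fin (S*N))
            then K m c a * K l c b else 0)
          - (if m = l ∧ i = j then 1 else 0)) ^ 2 := by
        refine Finset.sum_congr rfl fun m _ => ?_
        rw [Finset.sum_comm]
        refine Finset.sum_congr rfl fun l _ => Finset.sum_congr rfl fun i _ =>
          Finset.sum_congr rfl fun j _ => ?_
        rw [Matrix.sub_apply, Matrix.one_apply, key m l i j]
        congr 2
        exact if_congr (iff_of_eq (Prod.mk.injEq m i l j)) rfl rfl
    _ = ∑ m : Fin M, ∑ l : Fin M, (N : ℝ) * ∑ t : Fin (2*q0+1),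
          ((∑ c : Fin C, convPS r S (K m c) (K l c) t) -
            (if m = l ∧ (t : ℕ) = q0 then 1 else 0)) ^ 2 :=
        Finset.sum_congr rfl fun m _ => Finset.sum_congr rfl fun l _ => main m l
    _ = (N : ℝ) * ∑ m : Fin M, ∑ l : Fin M, ∑ t : Fin (2*q0+1),
          ((∑ c : Fin C, convPS r S (K m c) (K l c) t) -
            (if m = l ∧ (t : ℕ) = q0 then 1 else 0)) ^ 2 := by
        rw [Finset.mul_sum]
        exact Finset.sum_congr rfl fun m _ => (Finset.mul_sum _ _ _).symm
end
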